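/- arXiv:0709.2099 — 2 statements merged into one kernel-verified Lean document; each statement's English description precedes it below -/
import Mathlib

section
/- Let P be a simple d-polytope in E^d with m facets. Then there exists ε_1 > 0 such that σ_i(q(x)) > 0 for every 1 ≤ i ≤ m − d and every x ∈ P_{ε_1}. -/
/-! On `P` itself at most `d` of the numbers `q_F(x) ≥ 0` vanish, since the facets through `x`
meet in a face containing a vertex, which lies on exactly `d` facets; so at least `m - d` of them
are positive and `σ_i(q(x)) > 0` for `i ≤ m - d`. These finitely many polynomials stay positive
on a neighbourhood `cthickening δ P` of the compact set `P`, and `P_ε` lies in that neighbourhood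
for small `ε`: pulling `x ∈ P_ε` towards a point deep inside `P` by a fraction of order `ε` lands
in `P`. -/

noncomputable section

open Metric Set Finset Matrix
open scoped RealInnerProductSpace BigOperators Classical

namespace AverkovHenk

abbrev E (d : ℕ) := EuclideanSpace ℝ (Fin d)

/-- Support function `h(P,u)` of `P` in direction `u`. -/
def supp {d : ℕ} (P : Set (E d)) (u : E d) : ℝ :=
  sSup ((fun x => ⟪u, x⟫) '' P)

/-- The normalized affine function `q_F` of the facet with outward unit normal `u`. -/
def qf {d : ℕ} (P : Set (E d)) (u : E d) (x : E d) : ℝ :=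
  (supp P u - ⟪u, x⟫) / Metric.diam P

/-- The exposed face of `P` in direction `u`. -/
def faceOf {d : ℕ} (P : Set (E d)) (u : E d) : Set (E d) :=
  {x ∈ P | ⟪u, x⟫ = supp P u}

/-- `u` is an outward unit normal of a facet (a `(d-1)`-dimensional face) of `P`. -/
def IsFacetNormal {d : ℕ} (P : Set (E d)) (u : E d) : Prop :=
  ‖u‖ = 1 ∧ Module.finrank ℝ ↥(vectorSpan ℝ (faceOf P u)) = d - 1

/-- The vertices of `P`, i.e. its extreme points. -/
def vertices {d : ℕ} (P : Set (E d)) : Set (E d) := Set.extremePoints ℝ P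

/-- The `l`-th elementary symmetric function of `y_1, …, y_m`. -/
def esymm {m : ℕ} (y : Fin m → ℝ) (l : ℕ) : ℝ :=
  ∑ J ∈ Finset.powersetCard l (Finset.univ : Finset (Fin m)), ∏ j ∈ J, y j

/-- A presentation of a convex `d`-polytope `P ⊆ E^d` by the `m` outward unit normals
`u 0, …, u (m-1)` of its facets, together with the induced representation
`P = {x | q_j(x) ≥ 0 for all j}`. -/
structure FacetRep (d m : ℕ) where
  P : Set (E d)
  u : Fin m → E d
  convex : Convex ℝ P
  compact : IsCompact P
  fulldim : (interior P).Nonempty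
  inj : Function.Injective u
  facet : ∀ j, IsFacetNormal P (u j)
  complete : ∀ w : E d, IsFacetNormal P w → ∃ j, w = u j
  rep : P = {x | ∀ j, 0 ≤ qf P (u j) x}

namespace FacetRep

variable {d m : ℕ}

/-- The vector `q(x) = (q_1(x), …, q_m(x))`. -/
def q (R : FacetRep d m) (x : E d) : Fin m → ℝ := fun j => qf R.P (R.u j) x

/-- The indices of the facets containing the point `v`. -/
def act (R : FacetRep d m) (v : E d) : Finset (Fin m) :=
  Finset.univ.filter fun j => R.q v j = 0

/-- The polytope is simple: each vertex lies on exactly `d` facets. -/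
def Simple (R : FacetRep d m) : Prop :=
  ∀ v ∈ vertices R.P, (R.act v).card = d

/-- The enlarged polytope `P_ε`. -/
def Peps (R : FacetRep d m) (ε : ℝ) : Set (E d) := {x | ∀ j, -ε ≤ R.q x j}

/-- The box `Π_{v,ε} = {x : |q_v(x)|_∞ ≤ ε}`. -/
def Piv (R : FacetRep d m) (v : E d) (ε : ℝ) : Set (E d) :=
  {x | ∀ j ∈ R.act v, |R.q x j| ≤ ε}

/-- The cone `C_v = {x : -σ_1(q_v(x)) ≥ (2/3)|q_v(x)|}` (Euclidean norm). -/
def Cv (R : FacetRep d m) (v : E d) : Set (E d) :=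
  {x | (2/3) * Real.sqrt (∑ j ∈ R.act v, (R.q x j)^2) ≤ -(∑ j ∈ R.act v, R.q x j)}

/-- The polytope `P^v_{ε,δ}`. -/
def Pv (R : FacetRep d m) (v : E d) (ε δ : ℝ) : Set (E d) :=
  {x | (∀ j ∈ R.act v, -ε ≤ R.q x j) ∧ ∀ j ∉ R.act v, δ ≤ R.q x j}

/-- `γ = max{1 - q_F(v) : F a facet, v a vertex not on F}`. -/
def gam (R : FacetRep d m) : ℝ :=
  sSup {c | ∃ v ∈ vertices R.P, ∃ j, R.q v j ≠ 0 ∧ c = 1 - R.q v j}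

/-- The polynomial `f_k` built from weights `y_v` over the vertex set `V`. -/
def fk (R : FacetRep d m) (V : Finset (E d)) (y : ↥V → ℝ) (k : ℕ) (x : E d) : ℝ :=
  ∑ v : ↥V, y v * ((∑ j ∈ R.act v.1, (1 - R.q x j)^(2*k)) / (R.act v.1).card)^(2*k)

/-- The matrix `A_k` indexed by the vertex set `V`. -/
def Ak (R : FacetRep d m) (V : Finset (E d)) (k : ℕ) : Matrix ↥V ↥V ℝ :=
  Matrix.of fun w v : ↥V => ((∑ j ∈ R.act v.1, (1 - R.q w.1 j)^(2*k)) / (R.act v.1).card)^(2*k)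

/-- `deg(P)`: the maximal number of facets through a vertex. -/
def degP (R : FacetRep d m) (V : Finset (E d)) : ℕ := V.sup fun v => (R.act v).card

end FacetRep

/-- `|U_s^{-1}|_2` where `U_s` is the matrix with rows `u_j^T`, `j ∈ s`: the supremum of `‖x‖`
over the set where the Euclidean norm of `U_s x` is at most `1`. -/
def invNormU {d m : ℕ} (u : Fin m → E d) (s : Finset (Fin m)) : ℝ :=
  sSup {c | ∃ x : E d, Real.sqrt (∑ j ∈ s, (⟪u j, x⟫)^2) ≤ 1 ∧ c = ‖x‖}

/-- `α = max_{v ∈ vert(P)} |U_v^{-1}|_2`. -/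
def alpha {d m : ℕ} (R : FacetRep d m) (V : Finset (E d)) : ℝ :=
  sSup {a | ∃ v ∈ V, a = invNormU R.u (R.act v)}

/-- The normal cone `N(Q,x) = {u : ⟨x,u⟩ = h(Q,u)}`. -/
def normalCone {d : ℕ} (Q : Set (E d)) (x : E d) : Set (E d) :=
  {u | ⟪u, x⟫ = supp Q u}

/-- `S` is an edge (a 1-dimensional face) of `P`. -/
def IsEdgeOf {d : ℕ} (P S : Set (E d)) : Prop :=
  IsExposed ℝ P S ∧ Module.finrank ℝ ↥(vectorSpan ℝ S) = 1

section Support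

variable {d : ℕ} {P : Set (E d)}

lemma inner_le_supp (hP : Bornology.IsBounded P) (u : E d) {x : E d} (hx : x ∈ P) :
    ⟪u, x⟫ ≤ supp P u := by
  obtain ⟨C, hC⟩ := hP.exists_norm_le
  refine le_csSup ⟨‖u‖ * C, ?_⟩ ⟨x, hx, rfl⟩
  rintro _ ⟨y, hy, rfl⟩
  exact (real_inner_le_norm u y).trans (mul_le_mul_of_nonneg_left (hC y hy) (norm_nonneg u))

lemma inner_add_le_supp_of_closedBall_subset (hP : Bornology.IsBounded P) {x₀ u : E d}
    {ρ : ℝ} (hρ : 0 ≤ ρ) (hball : closedBall x₀ ρ ⊆ P) (hu : ‖u‖ = 1) :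
    ⟪u, x₀⟫ + ρ ≤ supp P u := by
  have hmem : x₀ + ρ • u ∈ P := hball <| by
    rw [mem_closedBall, dist_self_add_left, norm_smul, hu, Real.norm_of_nonneg hρ, mul_one]
  have := inner_le_supp hP u hmem
  rwa [inner_add_right, real_inner_smul_right, real_inner_self_eq_norm_sq, hu, one_pow,
    mul_one] at this

lemma diam_pos_of_closedBall_subset [NeZero d] (hP : Bornology.IsBounded P) {x₀ : E d}
    {ρ : ℝ} (hρ : 0 < ρ) (hball : closedBall x₀ ρ ⊆ P) : 0 < Metric.diam P :=
  calc 0 < 2 * ρ := by positivity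
    _ = Metric.diam (closedBall x₀ ρ) := (Metric.diam_closedBall_eq x₀ hρ.le).symm
    _ ≤ Metric.diam P := Metric.diam_mono hball hP

end Support

section Esymm

variable {m : ℕ}

lemma continuous_esymm (l : ℕ) : Continuous fun y : Fin m → ℝ => esymm y l :=
  continuous_finsetSum _ fun _ _ => continuous_finsetProd _ fun j _ => continuous_apply j

lemma esymm_pos {y : Fin m → ℝ} (hy : ∀ j, 0 ≤ y j) {S : Finset (Fin m)}
    (hS : ∀ j ∈ S, 0 < y j) {l : ℕ} (hl : l ≤ S.card) : 0 < esymm y l := by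
  obtain ⟨J, hJS, hJ⟩ := Finset.exists_subset_card_eq hl
  refine Finset.sum_pos' (fun K _ => Finset.prod_nonneg fun j _ => hy j) ⟨J, ?_, ?_⟩
  · exact Finset.mem_powersetCard.2 ⟨Finset.subset_univ J, hJ⟩
  · exact Finset.prod_pos fun j hj => hS j (hJS hj)

end Esymm

namespace FacetRep

variable {d m : ℕ} (R : FacetRep d m)

lemma q_add_smul {a b : ℝ} (hab : a + b = 1) (x y : E d) (j : Fin m) :
    R.q (a • x + b • y) j = a * R.q x j + b * R.q y j := by
  obtain rfl : a = 1 - b := eq_sub_of_add_eq hab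
  simp only [q, qf, inner_add_right, real_inner_smul_right]
  ring

lemma continuous_q : Continuous R.q :=
  continuous_pi fun _ => (continuous_const.sub (continuous_const.inner continuous_id)).div_const _

lemma mem_P_iff {x : E d} : x ∈ R.P ↔ ∀ j, 0 ≤ R.q x j := by
  conv_lhs => rw [R.rep]
  rfl

/-- The face of `P` cut out by the facets containing `x` has a vertex, which then lies on all
of these facets. -/
lemma exists_vertex_act_subset {x : E d} (hx : x ∈ R.P) :
    ∃ v ∈ vertices R.P, R.act x ⊆ R.act v := by
  set F : Set (E d) := R.P ∩ ⋂ j ∈ R.act x, (fun y => R.q y j) ⁻¹' {0}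
  have hmemF {y : E d} : y ∈ F ↔ y ∈ R.P ∧ ∀ j ∈ R.act x, R.q y j = 0 := by
    simp only [F, Set.mem_inter_iff, Set.mem_iInter₂, Set.mem_preimage, Set.mem_singleton_iff]
  have hxF : x ∈ F := hmemF.2 ⟨hx, fun j hj => (Finset.mem_filter.1 hj).2⟩
  have hFclosed : IsClosed F := R.compact.isClosed.inter <| isClosed_biInter fun j _ =>
    isClosed_singleton.preimage ((continuous_apply j).comp R.continuous_q)
  -- `q_j` is affine and nonnegative on `P`, so it vanishes at both ends of any segment of `P`
  -- on whose interior it vanishes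
  have hFext : IsExtreme ℝ R.P F := by
    refine ⟨Set.inter_subset_left, ?_⟩
    rintro x₁ hx₁ x₂ hx₂ z hz ⟨a, b, ha, hb, hab, rfl⟩
    refine hmemF.2 ⟨hx₁, fun j hj => ?_⟩
    have hzj := (hmemF.1 hz).2 j hj
    rw [R.q_add_smul hab] at hzj
    have h₁ := R.mem_P_iff.1 hx₁ j
    have h₂ := R.mem_P_iff.1 hx₂ j
    nlinarith [mul_nonneg ha.le h₁, mul_nonneg hb.le h₂]
  obtain ⟨v, hv⟩ := (R.compact.of_isClosed_subset hFclosed Set.inter_subset_left)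
    |>.extremePoints_nonempty ⟨x, hxF⟩
  refine ⟨v, hFext.extremePoints_subset_extremePoints hv, fun j hj => ?_⟩
  exact Finset.mem_filter.2 ⟨Finset.mem_univ j, (hmemF.1 hv.1).2 j hj⟩

lemma card_act_le (hs : R.Simple) {x : E d} (hx : x ∈ R.P) : (R.act x).card ≤ d := by
  obtain ⟨v, hv, hsub⟩ := R.exists_vertex_act_subset hx
  exact (Finset.card_le_card hsub).trans (hs v hv).le

lemma esymm_q_pos (hs : R.Simple) {x : E d} (hx : x ∈ R.P) {i : ℕ} (hi : i ≤ m - d) :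
    0 < esymm (R.q x) i := by
  refine esymm_pos (R.mem_P_iff.1 hx) (S := (R.act x)ᶜ) (fun j hj => ?_) ?_
  · have hj0 : R.q x j ≠ 0 := fun h =>
      Finset.mem_compl.1 hj (Finset.mem_filter.2 ⟨mem_univ j, h⟩)
    exact lt_of_le_of_ne (R.mem_P_iff.1 hx j) hj0.symm
  · rw [Finset.card_compl, Fintype.card_fin]
    have := R.card_act_le hs hx
    omega

lemma exists_q_ge [NeZero d] : ∃ x₀ ∈ R.P, ∃ r > 0, ∀ j, r ≤ R.q x₀ j := by
  obtain ⟨x₀, hx₀⟩ := R.fulldim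
  obtain ⟨ρ, hρ, hball⟩ :=
    Metric.nhds_basis_closedBall.mem_iff.1 (mem_interior_iff_mem_nhds.1 hx₀)
  have hD := diam_pos_of_closedBall_subset R.compact.isBounded hρ hball
  refine ⟨x₀, interior_subset hx₀, ρ / Metric.diam R.P, by positivity, fun j => ?_⟩
  have := inner_add_le_supp_of_closedBall_subset R.compact.isBounded hρ.le hball (R.facet j).1
  exact div_le_div_of_nonneg_right (by linarith) hD.le

/-- Pulling a point of `P_ε` towards a point `x₀` deep inside `P` lands in `P`: with
`t = ε / (ε + r)` the point `y = (1 - t) x + t x₀` has `q(y) ≥ 0`, and `x - y = (ε / r) (y - x₀)`. -/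
lemma Peps_subset_cthickening {x₀ : E d} (hx₀ : x₀ ∈ R.P) {r : ℝ} (hr : 0 < r)
    (hq : ∀ j, r ≤ R.q x₀ j) {ε : ℝ} (hε : 0 ≤ ε) :
    R.Peps ε ⊆ cthickening (ε / r * Metric.diam R.P) R.P := by
  intro x hx
  have hεr : 0 < ε + r := by linarith
  set t := ε / (ε + r)
  set y := (1 - t) • x + t • x₀
  have ht : 1 - t = r / (ε + r) := by simp only [t]; field_simp; ring
  have hyP : y ∈ R.P := by
    refine R.mem_P_iff.2 fun j => ?_
    rw [R.q_add_smul (sub_add_cancel 1 t), ht]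
    have key : 0 ≤ r * R.q x j + ε * R.q x₀ j := by nlinarith [hx j, hq j]
    calc (0 : ℝ) ≤ (r * R.q x j + ε * R.q x₀ j) / (ε + r) := by positivity
      _ = _ := by ring
  refine mem_cthickening_of_dist_le x y _ _ hyP ?_
  have hxy : x - y = (ε / r) • (y - x₀) := by
    simp only [y, t, smul_sub, smul_add, smul_smul, sub_smul, one_smul]
    match_scalars <;> field_simp <;> ring
  rw [dist_eq_norm, hxy, norm_smul, Real.norm_of_nonneg (by positivity), ← dist_eq_norm]
  exact mul_le_mul_of_nonneg_left (Metric.dist_le_diam_of_mem R.compact.isBounded hyP hx₀)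
    (by positivity)

end FacetRep

theorem statement4 (d m : ℕ) (hd : 2 ≤ d) (R : FacetRep d m) (hs : R.Simple) :
    ∃ ε₁ > (0 : ℝ), ∀ x ∈ R.Peps ε₁, ∀ i, 1 ≤ i → i ≤ m - d → 0 < esymm (R.q x) i := by
  have : NeZero d := ⟨by omega⟩
  set U : Set (E d) := ⋂ i ∈ Finset.range (m - d + 1), {x | 0 < esymm (R.q x) i}
  have hU : IsOpen U := isOpen_biInter_finset fun i _ =>
    isOpen_lt continuous_const ((continuous_esymm i).comp R.continuous_q)
  have hPU : R.P ⊆ U := fun x hx => Set.mem_iInter₂.2 fun i hi =>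
    R.esymm_q_pos hs hx (Nat.lt_succ_iff.1 (Finset.mem_range.1 hi))
  obtain ⟨δ, hδ, hδU⟩ := R.compact.exists_cthickening_subset_open hU hPU
  obtain ⟨x₀, hx₀, r, hr, hq⟩ := R.exists_q_ge
  set D := Metric.diam R.P
  have hD : 0 ≤ D := Metric.diam_nonneg
  refine ⟨r * δ / (D + 1), by positivity, fun x hx i _ hi => ?_⟩
  have hεδ : r * δ / (D + 1) / r * D ≤ δ :=
    calc r * δ / (D + 1) / r * D = δ * (D / (D + 1)) := by field_simp
      _ ≤ δ := mul_le_of_le_one_right hδ.le (div_le_one_of_le₀ (by linarith) (by positivity))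
  have hxU : x ∈ U :=
    hδU <| cthickening_mono hεδ _ <| R.Peps_subset_cthickening hx₀ hr hq (by positivity) hx
  exact Set.mem_iInter₂.1 hxU i (Finset.mem_range.2 (by omega))

end AverkovHenk
end
end

section
/- Let P be a simple d-polytope in E^d with m facets. Then there exists ε_2 > 0 such that for every vertex v of P, {x ∈ Π_{v,ε_2} : σ_i(q(x)) ≥ 0 for all m−d+2 ≤ i ≤ m} ⊆ P ∪ C_v. -/
/-!
Near a vertex `v` the coordinates `q_j(x)` of the facets not through `v` stay in a fixed interval
`[δ, 2]`, while the `d` coordinates `y = q_v(x)` are small. Split `∏_j (X + q_j(x)) = f * g` with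
`f = ∏_{j ∈ act v} (X + y_j)`. The hypotheses `σ_i(q(x)) ≥ 0`, `i ≥ m - d + 2`, say that the
`d - 1` lowest coefficients of `f * g` are nonnegative, and since the coefficients of `g` are
positive and comparable to each other, every such coefficient of `f` is at least `-M` times the
positive parts of the lower ones. If `x ∉ P`, some `y_j` is negative and `-y_j` is a small positive
root of `f`; evaluating `f` there gives `σ₁(y) ≤ y_j < 0`, and the same bound gives
`σ₂(y) ≥ -O(|y|_∞³)`. Hence `σ₁(y)² = |y|² + 2 σ₂(y) ≥ (4/9) |y|²`, i.e. `x ∈ C_v`. There are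
finitely many vertices, so one `ε` serves all of them.
-/

noncomputable section

open Metric Set Finset Matrix
open scoped RealInnerProductSpace BigOperators Classical

open Polynomial

theorem sum_mul_pow_nonneg_of_cascade {a : ℕ → ℝ} {M β : ℝ} {n : ℕ} (hM : 0 ≤ M)
    (hβ₀ : 0 ≤ β) (hβ₁ : β ≤ 1) (hsmall : n * (M * β) ≤ 1)
    (ha : ∀ i < n, -(M * ∑ k ∈ range i, max (a k) 0) ≤ a i) :
    0 ≤ ∑ i ∈ range n, a i * β ^ i := by
  set Q := ∑ i ∈ range n, max (a i) 0 * β ^ i with hQ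
  have hQ₀ : 0 ≤ Q := sum_nonneg fun i _ => by positivity
  have hterm : ∀ i ∈ range n, max (a i) 0 * β ^ i - M * β * Q ≤ a i * β ^ i := by
    intro i hi
    rw [Finset.mem_range] at hi
    have hdefect : max (a i) 0 - a i ≤ M * ∑ k ∈ range i, max (a k) 0 := by
      rcases le_total (a i) 0 with h | h
      · rw [max_eq_right h]; linarith [ha i hi]
      · rw [max_eq_left h, sub_self]; positivity
    -- `β ^ i ≤ β * β ^ k` for `k < i` lets the earlier positive parts be absorbed into `β * Q`
    have hshift : (∑ k ∈ range i, max (a k) 0) * β ^ i ≤ β * Q := by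
      rw [sum_mul, hQ, mul_sum]
      calc ∑ k ∈ range i, max (a k) 0 * β ^ i
          ≤ ∑ k ∈ range i, β * (max (a k) 0 * β ^ k) := by
            refine sum_le_sum fun k hk => ?_
            rw [mul_left_comm, ← pow_succ']
            exact mul_le_mul_of_nonneg_left
              (pow_le_pow_of_le_one hβ₀ hβ₁ (Finset.mem_range.1 hk)) (le_max_right _ _)
        _ ≤ ∑ k ∈ range n, β * (max (a k) 0 * β ^ k) :=
            sum_le_sum_of_subset_of_nonneg (range_mono hi.le) fun _ _ _ => by positivity
    have := mul_le_mul_of_nonneg_right hdefect (pow_nonneg hβ₀ i)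
    nlinarith
  have hsum := sum_le_sum hterm
  rw [sum_sub_distrib, sum_const, card_range, nsmul_eq_mul] at hsum
  nlinarith

theorem Finset.sq_sum_eq_sum_sq_add_two_mul {ι R : Type*} [DecidableEq ι] [CommRing R]
    (s : Finset ι) (y : ι → R) :
    (∑ j ∈ s, y j) ^ 2 = ∑ j ∈ s, y j ^ 2 + 2 * ∑ t ∈ s.powersetCard 2, ∏ j ∈ t, y j := by
  induction s using Finset.induction_on with
  | empty => simp [powersetCard_eq_empty.2 (show #(∅ : Finset ι) < 2 by simp)]
  | insert a s ha ih =>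
    have hpairs : ∑ t ∈ (s.powersetCard 1).image (insert a), ∏ j ∈ t, y j
        = y a * ∑ j ∈ s, y j := by
      rw [sum_image, powersetCard_one, sum_map, mul_sum]
      · exact sum_congr rfl fun x hx => prod_pair (ne_of_mem_of_not_mem hx ha).symm
      · intro t ht t' ht' h
        have hat : a ∉ t := fun h => ha ((mem_powersetCard.1 ht).1 h)
        have hat' : a ∉ t' := fun h => ha ((mem_powersetCard.1 ht').1 h)
        simpa [erase_insert hat, erase_insert hat'] using congrArg (erase · a) h
    have hdisj : Disjoint (s.powersetCard 2) ((s.powersetCard 1).image (insert a)) := by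
      refine disjoint_left.2 fun t ht ht' => ?_
      obtain ⟨t', -, rfl⟩ := mem_image.1 ht'
      exact ha ((mem_powersetCard.1 ht).1 (mem_insert_self a t'))
    rw [powersetCard_succ_insert ha, sum_union hdisj, hpairs, sum_insert ha, sum_insert ha]
    linear_combination ih

namespace Polynomial

theorem coeff_ge_of_coeff_mul_nonneg {f g : ℝ[X]} {M : ℝ} (hg : ∀ k, 0 ≤ g.coeff k)
    (hg₀ : 0 < g.coeff 0) (hgM : ∀ k, g.coeff k ≤ M * g.coeff 0) {n : ℕ}
    (hn : 0 ≤ (f * g).coeff n) :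
    -(M * ∑ k ∈ range n, max (f.coeff k) 0) ≤ f.coeff n := by
  rw [coeff_mul, Finset.Nat.sum_antidiagonal_eq_sum_range_succ_mk, sum_range_succ,
    Nat.sub_self] at hn
  have hlow : ∑ k ∈ range n, f.coeff k * g.coeff (n - k)
      ≤ (M * ∑ k ∈ range n, max (f.coeff k) 0) * g.coeff 0 := by
    rw [mul_comm M, mul_assoc, sum_mul]
    refine sum_le_sum fun k _ => ?_
    calc f.coeff k * g.coeff (n - k) ≤ max (f.coeff k) 0 * g.coeff (n - k) :=
          mul_le_mul_of_nonneg_right (le_max_left _ _) (hg _)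
      _ ≤ max (f.coeff k) 0 * (M * g.coeff 0) :=
          mul_le_mul_of_nonneg_left (hgM _) (le_max_right _ _)
  exact le_of_mul_le_mul_right (by rw [neg_mul]; linarith) hg₀

theorem Monic.coeff_le_neg_of_eval_eq_zero {f : ℝ[X]} (hf : f.Monic) {n : ℕ}
    (hdeg : f.natDegree = n + 2) {M β : ℝ} (hM : 0 ≤ M) (hβ₀ : 0 < β) (hβ₁ : β ≤ 1)
    (hsmall : (n + 1) * (M * β) ≤ 1) (hroot : f.eval β = 0)
    (hcascade : ∀ i ≤ n, -(M * ∑ k ∈ range i, max (f.coeff k) 0) ≤ f.coeff i) :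
    f.coeff (n + 1) ≤ -β := by
  have hlow : 0 ≤ ∑ i ∈ range (n + 1), f.coeff i * β ^ i :=
    sum_mul_pow_nonneg_of_cascade hM hβ₀.le hβ₁ (by exact_mod_cast hsmall)
      fun i hi => hcascade i (by omega)
  have hlead : f.coeff (n + 2) = 1 := hdeg ▸ hf.coeff_natDegree
  rw [eval_eq_sum_range' (n := n + 3) (by omega), sum_range_succ, sum_range_succ, hlead]
    at hroot
  have hpow : (0 : ℝ) < β ^ (n + 1) := by positivity
  refine le_of_mul_le_mul_right ?_ hpow
  rw [neg_mul, ← pow_succ']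
  linarith

variable {ι : Type*}

theorem coeff_prod_X_add_C_nonneg {s : Finset ι} {c : ι → ℝ} (hc : ∀ j ∈ s, 0 ≤ c j) (k : ℕ) :
    0 ≤ (∏ j ∈ s, (X + C (c j))).coeff k := by
  rcases le_or_gt k #s with hk | hk
  · rw [s.prod_X_add_C_coeff c hk]
    exact sum_nonneg fun t ht =>
      prod_nonneg fun j hj => hc j ((mem_powersetCard.1 ht).1 hj)
  · rw [coeff_eq_zero_of_natDegree_lt (by simpa [natDegree_prod_of_monic, monic_X_add_C])]

theorem coeff_zero_prod_X_add_C (s : Finset ι) (c : ι → ℝ) :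
    (∏ j ∈ s, (X + C (c j))).coeff 0 = ∏ j ∈ s, c j := by
  simp [coeff_zero_eq_eval_zero, eval_prod]

theorem abs_coeff_prod_X_add_C_le {s : Finset ι} {c : ι → ℝ} {ρ : ℝ} (hρ : 0 ≤ ρ)
    (hc : ∀ j ∈ s, |c j| ≤ ρ) (k : ℕ) :
    |(∏ j ∈ s, (X + C (c j))).coeff k| ≤ 2 ^ #s * ρ ^ (#s - k) := by
  rcases le_or_gt k #s with hk | hk
  · rw [s.prod_X_add_C_coeff c hk]
    calc |∑ t ∈ s.powersetCard (#s - k), ∏ j ∈ t, c j|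
        ≤ ∑ t ∈ s.powersetCard (#s - k), ρ ^ (#s - k) := by
          refine (abs_sum_le_sum_abs _ _).trans (sum_le_sum fun t ht => ?_)
          obtain ⟨hts, htcard⟩ := mem_powersetCard.1 ht
          rw [abs_prod, ← htcard, ← prod_const]
          exact prod_le_prod (fun _ _ => abs_nonneg _) fun j hj => hc j (hts hj)
      _ = (#s).choose (#s - k) * ρ ^ (#s - k) := by
          rw [sum_const, card_powersetCard, nsmul_eq_mul]
      _ ≤ 2 ^ #s * ρ ^ (#s - k) := by
          gcongr
          exact_mod_cast Nat.choose_le_two_pow _ _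
  · rw [coeff_eq_zero_of_natDegree_lt (by simpa [natDegree_prod_of_monic, monic_X_add_C]),
      abs_zero]
    positivity

theorem coeff_prod_X_add_C_le_mul_coeff_zero {s : Finset ι} {c : ι → ℝ} {δ Λ : ℝ}
    (hδ : 0 < δ) (hΛ : 1 ≤ Λ) (hc : ∀ j ∈ s, δ ≤ c j ∧ c j ≤ Λ) (k : ℕ) :
    (∏ j ∈ s, (X + C (c j))).coeff k
      ≤ (2 * Λ / δ) ^ #s * (∏ j ∈ s, (X + C (c j))).coeff 0 := by
  have habs : ∀ j ∈ s, |c j| ≤ Λ := fun j hj =>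
    abs_le.2 ⟨by linarith [(hc j hj).1], (hc j hj).2⟩
  calc (∏ j ∈ s, (X + C (c j))).coeff k
      ≤ 2 ^ #s * Λ ^ (#s - k) :=
        (le_abs_self _).trans (abs_coeff_prod_X_add_C_le (by linarith) habs k)
    _ ≤ 2 ^ #s * Λ ^ #s := by
        gcongr 2 ^ #s * ?_
        exact pow_le_pow_right₀ hΛ (Nat.sub_le _ _)
    _ = (2 * Λ / δ) ^ #s * δ ^ #s := by rw [div_pow, mul_pow]; field_simp
    _ ≤ (2 * Λ / δ) ^ #s * (∏ j ∈ s, (X + C (c j))).coeff 0 := by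
        rw [coeff_zero_prod_X_add_C]
        refine mul_le_mul_of_nonneg_left ((prod_const δ).symm.trans_le ?_) (by positivity)
        exact prod_le_prod (fun _ _ => hδ.le) fun j hj => (hc j hj).1

theorem coeff_prod_X_add_C_card_sub_one (s : Finset ι) (c : ι → ℝ) (hs : s.Nonempty) :
    (∏ j ∈ s, (X + C (c j))).coeff (#s - 1) = ∑ j ∈ s, c j := by
  rw [s.prod_X_add_C_coeff c (Nat.sub_le _ _), Nat.sub_sub_self hs.card_pos, powersetCard_one,
    sum_map]
  simp

theorem coeff_prod_X_add_C_card_sub_two (s : Finset ι) (c : ι → ℝ) (hs : 2 ≤ #s) :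
    (∏ j ∈ s, (X + C (c j))).coeff (#s - 2) = ∑ t ∈ s.powersetCard 2, ∏ j ∈ t, c j := by
  rw [s.prod_X_add_C_coeff c (Nat.sub_le _ _), Nat.sub_sub_self hs]

end Polynomial

theorem sum_le_of_mem_of_cascade {ι : Type*} {A : Finset ι} {y : ι → ℝ} {e : ℕ}
    (he : #A = e + 2) {M : ℝ} (hM : 0 ≤ M)
    (hcascade : ∀ i ≤ e, -(M * ∑ k ∈ range i, max ((∏ j ∈ A, (X + C (y j))).coeff k) 0)
      ≤ (∏ j ∈ A, (X + C (y j))).coeff i)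
    {j₀ : ι} (hj₀ : j₀ ∈ A) (hneg : y j₀ < 0) (hy₀ : -1 ≤ y j₀)
    (hsmall : (e + 1) * (M * -y j₀) ≤ 1) :
    ∑ j ∈ A, y j ≤ y j₀ := by
  have hroot : (∏ j ∈ A, (X + C (y j))).eval (-y j₀) = 0 := by
    rw [eval_prod]
    exact prod_eq_zero hj₀ (by simp)
  have h := (monic_prod_of_monic _ _ fun j _ => monic_X_add_C (y j)).coeff_le_neg_of_eval_eq_zero
    (by simp [natDegree_prod_of_monic, monic_X_add_C, he]) hM (by linarith) (by linarith)
    hsmall hroot hcascade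
  rwa [neg_neg, show e + 1 = #A - 1 by omega, coeff_prod_X_add_C_card_sub_one A y ⟨j₀, hj₀⟩] at h

theorem neg_le_sum_powersetCard_two_of_cascade {ι : Type*} {A : Finset ι} {y : ι → ℝ} {e : ℕ}
    (he : #A = e + 2) {M ρ : ℝ} (hM : 0 ≤ M) (hρ₀ : 0 ≤ ρ) (hρ₁ : ρ ≤ 1)
    (hyρ : ∀ j ∈ A, |y j| ≤ ρ)
    (hcascade : -(M * ∑ k ∈ range e, max ((∏ j ∈ A, (X + C (y j))).coeff k) 0)
      ≤ (∏ j ∈ A, (X + C (y j))).coeff e) :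
    -(M * (e * (2 ^ (e + 2) * ρ ^ 3))) ≤ ∑ t ∈ A.powersetCard 2, ∏ j ∈ t, y j := by
  rw [← coeff_prod_X_add_C_card_sub_two A y (by omega), he, Nat.add_sub_cancel]
  refine le_trans ?_ hcascade
  gcongr
  calc ∑ k ∈ range e, max ((∏ j ∈ A, (X + C (y j))).coeff k) 0
      ≤ ∑ _k ∈ range e, 2 ^ (e + 2) * ρ ^ 3 := by
        refine sum_le_sum fun k hk => ?_
        have hk : k < e := mem_range.1 hk
        calc max ((∏ j ∈ A, (X + C (y j))).coeff k) 0
            ≤ |(∏ j ∈ A, (X + C (y j))).coeff k| := max_le (le_abs_self _) (abs_nonneg _)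
          _ ≤ 2 ^ #A * ρ ^ (#A - k) := abs_coeff_prod_X_add_C_le hρ₀ hyρ k
          _ ≤ 2 ^ (e + 2) * ρ ^ 3 := by
              rw [he]
              gcongr 2 ^ (e + 2) * ?_
              exact pow_le_pow_of_le_one hρ₀ hρ₁ (by omega)
    _ = e * (2 ^ (e + 2) * ρ ^ 3) := by rw [sum_const, card_range, nsmul_eq_mul]

namespace AverkovHenk

theorem coeff_prod_X_add_C_eq_esymm {m : ℕ} (y : Fin m → ℝ) {n : ℕ} (hn : n ≤ m) :
    (∏ j, (X + C (y j))).coeff n = esymm y (m - n) := by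
  rw [prod_X_add_C_coeff _ _ (by simpa using hn), card_univ, Fintype.card_fin, esymm]

theorem coeff_prod_X_add_C_ge_of_esymm_nonneg {m : ℕ} {y : Fin m → ℝ} {A : Finset (Fin m)}
    {δ Λ : ℝ} (hδ : 0 < δ) (hΛ : 1 ≤ Λ) (hB : ∀ j ∉ A, δ ≤ y j ∧ y j ≤ Λ)
    (hσ : ∀ i, m - #A + 2 ≤ i → i ≤ m → 0 ≤ esymm y i) {n : ℕ} (hn : n + 2 ≤ #A) :
    -((2 * Λ / δ) ^ #Aᶜ * ∑ k ∈ range n, max ((∏ j ∈ A, (X + C (y j))).coeff k) 0)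
      ≤ (∏ j ∈ A, (X + C (y j))).coeff n := by
  have hBc : ∀ j ∈ Aᶜ, δ ≤ y j ∧ y j ≤ Λ := fun j hj => hB j (mem_compl.1 hj)
  have hAm : #A ≤ m := by simpa using card_le_univ A
  refine coeff_ge_of_coeff_mul_nonneg
    (coeff_prod_X_add_C_nonneg fun j hj => hδ.le.trans (hBc j hj).1) ?_
    (coeff_prod_X_add_C_le_mul_coeff_zero hδ hΛ hBc) ?_
  · rw [coeff_zero_prod_X_add_C]
    exact prod_pos fun j hj => hδ.trans_le (hBc j hj).1
  · rw [prod_mul_prod_compl, coeff_prod_X_add_C_eq_esymm y (n := n) (by omega)]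
    exact hσ _ (by omega) (by omega)

theorem exists_pos_two_thirds_sqrt_sum_sq_le_neg_sum {m : ℕ} {A : Finset (Fin m)}
    (hA : 2 ≤ #A) {δ Λ : ℝ} (hδ : 0 < δ) (hΛ : 1 ≤ Λ) :
    ∃ ε > 0, ∀ y : Fin m → ℝ, (∀ j ∉ A, δ ≤ y j ∧ y j ≤ Λ) → (∀ j ∈ A, |y j| ≤ ε) →
      (∀ i, m - #A + 2 ≤ i → i ≤ m → 0 ≤ esymm y i) → (∃ j ∈ A, y j < 0) →
      2 / 3 * √(∑ j ∈ A, y j ^ 2) ≤ -∑ j ∈ A, y j := by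
  obtain ⟨e, he⟩ : ∃ e, #A = e + 2 := ⟨#A - 2, by omega⟩
  set M := (2 * Λ / δ) ^ #Aᶜ
  have hM : 0 ≤ M := by positivity
  set K : ℝ := 2 ^ (e + 4) * (e + 3) * (M + 1)
  have hK : 0 < K := by positivity
  have hKe : (e + 1) * M ≤ K := by
    calc (e + 1) * M = 1 * (e + 1) * M := by ring
      _ ≤ 2 ^ (e + 4) * (e + 3) * (M + 1) := by
          gcongr <;> first | exact one_le_pow₀ (by norm_num) | linarith
  have hK₁ : 1 ≤ K :=
    calc (1 : ℝ) = 1 * 1 * 1 := by ring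
      _ ≤ 2 ^ (e + 4) * (e + 3) * (M + 1) := by
          gcongr <;> first | exact one_le_pow₀ (by norm_num) | linarith
  refine ⟨1 / K, by positivity, ?_⟩
  rintro y hB hyε hσ ⟨j₀, hj₀, hneg⟩
  have hcascade := fun i (hi : i ≤ e) =>
    coeff_prod_X_add_C_ge_of_esymm_nonneg (n := i) hδ hΛ hB hσ (by omega)
  obtain ⟨j₁, hj₁, hyρ⟩ := A.exists_max_image (fun j => |y j|) ⟨j₀, hj₀⟩
  set ρ := |y j₁|
  have hρε : ρ ≤ 1 / K := hyε j₁ hj₁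
  have hρ₁ : ρ ≤ 1 := hρε.trans (div_le_one_of_le₀ hK₁ hK.le)
  have hy₀ : -y j₀ ≤ ρ := by simpa [abs_of_neg hneg] using hyρ j₀ hj₀
  have hσ₁ : ∑ j ∈ A, y j ≤ y j₀ := by
    refine sum_le_of_mem_of_cascade he hM hcascade hj₀ hneg (by linarith) ?_
    calc (e + 1) * (M * -y j₀) ≤ ((e + 1) * M) * (1 / K) := by
          rw [mul_assoc]; gcongr; exact hy₀.trans hρε
      _ ≤ K * (1 / K) := by gcongr
      _ = 1 := mul_one_div_cancel hK.ne'
  have hσ₂ := neg_le_sum_powersetCard_two_of_cascade he hM (abs_nonneg _) hρ₁ hyρ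
    (hcascade e le_rfl)
  set S := ∑ j ∈ A, y j ^ 2
  have hS₀ : 0 ≤ S := sum_nonneg fun j _ => sq_nonneg _
  have hρ₃ : ρ ^ 3 ≤ 1 / K * S := by
    have hρS : ρ ^ 2 ≤ S := by
      rw [sq_abs]
      exact single_le_sum (f := fun j => y j ^ 2) (fun j _ => sq_nonneg _) hj₁
    calc ρ ^ 3 = ρ * ρ ^ 2 := by ring
      _ ≤ 1 / K * S := by gcongr
  have hcoef : 2 * (M * (e * 2 ^ (e + 2))) * (1 / K) ≤ 1 / 2 := by
    rw [mul_one_div, div_le_iff₀ hK]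
    have : (e : ℝ) * M ≤ (e + 3) * (M + 1) := by gcongr <;> linarith
    calc 2 * (M * (e * 2 ^ (e + 2))) = 2 ^ (e + 4) * (e * M) / 2 := by ring
      _ ≤ 2 ^ (e + 4) * ((e + 3) * (M + 1)) / 2 := by gcongr
      _ = 1 / 2 * K := by ring
  -- `σ₁² = S + 2 σ₂ ≥ S - 2 M e 2 ^ (e + 2) ρ³ ≥ S / 2`
  have hS : 4 / 9 * S ≤ (∑ j ∈ A, y j) ^ 2 := by
    rw [sq_sum_eq_sum_sq_add_two_mul]
    nlinarith [mul_le_mul_of_nonneg_left hρ₃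
      (by positivity : (0 : ℝ) ≤ 2 * (M * (e * 2 ^ (e + 2)))),
      mul_le_mul_of_nonneg_right hcoef hS₀]
  rw [← le_div_iff₀' (by norm_num), Real.sqrt_le_iff]
  constructor <;> nlinarith

open Filter Topology

namespace FacetRep

variable {d m : ℕ} (R : FacetRep d m)

theorem diam_pos (hd : 0 < d) : 0 < Metric.diam R.P := by
  have : Nonempty (Fin d) := ⟨⟨0, hd⟩⟩
  obtain ⟨x, hx⟩ := R.fulldim
  exact Metric.diam_pos ((infinite_of_mem_nhds x (mem_interior_iff_mem_nhds.1 hx)).nontrivial)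
    R.compact.isBounded

theorem mem_iff (x : E d) : x ∈ R.P ↔ ∀ j, 0 ≤ R.q x j := by
  rw [R.rep]
  rfl

theorem q_sub_q (x y : E d) (j : Fin m) :
    R.q x j - R.q y j = ⟪R.u j, y - x⟫ / Metric.diam R.P := by
  simp only [q, qf, inner_sub_right]
  ring

theorem abs_q_sub_q_le (x y : E d) (j : Fin m) :
    |R.q x j - R.q y j| ≤ ‖x - y‖ / Metric.diam R.P := by
  rw [R.q_sub_q, abs_div, abs_of_nonneg Metric.diam_nonneg, norm_sub_rev]
  gcongr
  simpa [(R.facet j).1] using abs_real_inner_le_norm (R.u j) (y - x)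

theorem q_le_one {x : E d} (hx : x ∈ R.P) (j : Fin m) : R.q x j ≤ 1 := by
  refine div_le_one_of_le₀ (sub_le_iff_le_add'.2 <|
    csSup_le ((R.fulldim.mono interior_subset).image _) ?_) Metric.diam_nonneg
  rintro _ ⟨p, hp, rfl⟩
  have h₁ : ⟪R.u j, p - x⟫ ≤ ‖p - x‖ := by
    simpa [(R.facet j).1] using real_inner_le_norm (R.u j) (p - x)
  have h₂ : ‖p - x‖ ≤ Metric.diam R.P := by
    rw [← dist_eq_norm]
    exact Metric.dist_le_diam_of_mem R.compact.isBounded hp hx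
  rw [inner_sub_right] at h₁
  linarith

theorem q_act {v : E d} {j : Fin m} (hj : j ∈ R.act v) : R.q v j = 0 := (mem_filter.1 hj).2

theorem exists_le_q_of_notMem_act {v : E d} (hv : v ∈ R.P) :
    ∃ δ, 0 < δ ∧ δ ≤ 1 ∧ ∀ j ∉ R.act v, δ ≤ R.q v j := by
  have hq : ∀ j, ∀ᶠ δ in 𝓝[>] (0 : ℝ), j ∉ R.act v → δ ≤ R.q v j := fun j => by
    by_cases hj : j ∈ R.act v
    · exact .of_forall fun _ h => absurd hj h
    · have hpos : 0 < R.q v j :=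
        ((R.mem_iff v).1 hv j).lt_of_ne' fun h => hj (mem_filter.2 ⟨mem_univ _, h⟩)
      filter_upwards [Ioo_mem_nhdsGT hpos] with δ hδ _ using hδ.2.le
  obtain ⟨δ, ⟨hδ₀, hδ₁⟩, hδ⟩ :=
    (Filter.Eventually.and (Ioc_mem_nhdsGT one_pos) (Filter.eventually_all.2 hq)).exists
  exact ⟨δ, hδ₀, hδ₁, hδ⟩

theorem eq_zero_of_forall_inner_act_eq_zero (hd : 0 < d) {v : E d} (hv : v ∈ vertices R.P)
    {w : E d} (hw : ∀ j ∈ R.act v, ⟪R.u j, w⟫ = 0) : w = 0 := by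
  obtain ⟨δ, hδ₀, -, hδ⟩ := R.exists_le_q_of_notMem_act hv.1
  have hD := R.diam_pos hd
  have hmem : ∀ t : ℝ, |t| * ‖w‖ ≤ δ * Metric.diam R.P → v + t • w ∈ R.P := by
    intro t ht
    refine (R.mem_iff _).2 fun j => ?_
    by_cases hj : j ∈ R.act v
    · have h := R.q_sub_q (v + t • w) v j
      rw [R.q_act hj, sub_zero, show v - (v + t • w) = -(t • w) by abel, inner_neg_right,
        real_inner_smul_right, hw j hj] at h
      simp [h]
    · have h := (abs_le.1 (R.abs_q_sub_q_le (v + t • w) v j)).1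
      rw [add_sub_cancel_left, norm_smul, Real.norm_eq_abs] at h
      have := hδ j hj
      have := (div_le_iff₀ hD).2 ht
      linarith
  by_contra hw₀
  set t := δ * Metric.diam R.P / ‖w‖
  have ht : |t| * ‖w‖ = δ * Metric.diam R.P := by
    rw [abs_of_pos (by positivity), div_mul_cancel₀ _ (norm_ne_zero_iff.2 hw₀)]
  have hseg : v ∈ openSegment ℝ (v + (-t) • w) (v + t • w) :=
    ⟨1 / 2, 1 / 2, by norm_num, by norm_num, by norm_num, by module⟩
  have hvt := hv.2 (hmem (-t) (by rw [abs_neg, ht])) (hmem t ht.le) hseg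
  rw [add_eq_left, smul_eq_zero, neg_eq_zero] at hvt
  exact hvt.elim (by positivity) hw₀

theorem eventually_abs_q_sub_q_le (hd : 0 < d) {v : E d} (hv : v ∈ vertices R.P) {η : ℝ}
    (hη : 0 < η) : ∀ᶠ ε in 𝓝[>] (0 : ℝ), ∀ x ∈ R.Piv v ε, ∀ j, |R.q x j - R.q v j| ≤ η := by
  have hD := R.diam_pos hd
  let T : E d →ₗ[ℝ] (R.act v → ℝ) := LinearMap.pi fun j => (innerSL ℝ (R.u j)).toLinearMap
  have hT : LinearMap.ker T = ⊥ := LinearMap.ker_eq_bot'.2 fun w hw =>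
    R.eq_zero_of_forall_inner_act_eq_zero hd hv fun j hj => congrFun hw ⟨j, hj⟩
  obtain ⟨K, -, hK⟩ := T.exists_antilipschitzWith hT
  filter_upwards [Ioo_mem_nhdsGT (show 0 < η / (K + 1) by positivity)] with ε hε x hx j
  have hε₀ : 0 < ε := hε.1
  have hTx : ‖T (x - v)‖ ≤ Metric.diam R.P * ε := by
    refine (pi_norm_le_iff_of_nonneg (by positivity)).2 fun ⟨i, hi⟩ => ?_
    have h := R.q_sub_q x v i
    rw [R.q_act hi, sub_zero, eq_div_iff hD.ne', ← neg_sub, inner_neg_right] at h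
    change |⟪R.u i, x - v⟫| ≤ _
    rw [show ⟪R.u i, x - v⟫ = -(R.q x i * Metric.diam R.P) by linarith, abs_neg, abs_mul,
      abs_of_pos hD, mul_comm]
    exact mul_le_mul_of_nonneg_left (hx i hi) hD.le
  calc |R.q x j - R.q v j| ≤ ‖x - v‖ / Metric.diam R.P := R.abs_q_sub_q_le x v j
    _ ≤ K * (Metric.diam R.P * ε) / Metric.diam R.P := by
        gcongr
        exact (ZeroHomClass.bound_of_antilipschitz T hK _).trans (by gcongr)
    _ = K * ε := by field_simp
    _ ≤ (K + 1) * ε := by gcongr; linarith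
    _ ≤ η := by rw [← le_div_iff₀' (by positivity)]; exact hε.2.le

theorem finite_vertices (hd : 0 < d) : (vertices R.P).Finite := by
  refine Set.Finite.of_finite_image (Set.toFinite (R.act '' vertices R.P))
    fun v hv w hw hvw => ?_
  refine sub_eq_zero.1 (R.eq_zero_of_forall_inner_act_eq_zero hd hv fun j hj => ?_)
  have h := R.q_sub_q w v j
  rw [R.q_act hj, R.q_act (show j ∈ R.act w from hvw ▸ hj), sub_self, eq_comm,
    div_eq_zero_iff] at h
  exact h.resolve_right (R.diam_pos hd).ne'

theorem eventually_subset_union_Cv (hd : 2 ≤ d) (hs : R.Simple) {v : E d}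
    (hv : v ∈ vertices R.P) :
    ∀ᶠ ε in 𝓝[>] (0 : ℝ),
      {x ∈ R.Piv v ε | ∀ i, m - d + 2 ≤ i → i ≤ m → 0 ≤ esymm (R.q x) i} ⊆ R.P ∪ R.Cv v := by
  obtain ⟨δ, hδ₀, hδ₁, hδ⟩ := R.exists_le_q_of_notMem_act hv.1
  obtain ⟨ε₀, hε₀, hcone⟩ := exists_pos_two_thirds_sqrt_sum_sq_le_neg_sum
    (A := R.act v) (by rw [hs v hv]; exact hd) (half_pos hδ₀) one_le_two
  filter_upwards [R.eventually_abs_q_sub_q_le (by omega) hv (half_pos hδ₀),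
    Ioc_mem_nhdsGT hε₀] with ε hnear hε
  rintro x ⟨hxbox, hσ⟩
  have hfar : ∀ j ∉ R.act v, δ / 2 ≤ R.q x j ∧ R.q x j ≤ 2 := fun j hj => by
    have := abs_le.1 (hnear x hxbox j)
    have := hδ j hj
    have := R.q_le_one hv.1 j
    constructor <;> linarith
  by_cases hP : ∀ j ∈ R.act v, 0 ≤ R.q x j
  · refine Or.inl ((R.mem_iff x).2 fun j => ?_)
    by_cases hj : j ∈ R.act v
    · exact hP j hj
    · linarith [(hfar j hj).1]
  · push Not at hP
    exact Or.inr (hcone (R.q x) hfar (fun j hj => (hxbox j hj).trans hε.2)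
      (by rwa [hs v hv]) hP)

end FacetRep

theorem statement5 (d m : ℕ) (hd : 2 ≤ d) (R : FacetRep d m) (hs : R.Simple) :
    ∃ ε₂ > (0 : ℝ), ∀ v ∈ vertices R.P,
      {x ∈ R.Piv v ε₂ | ∀ i, m - d + 2 ≤ i → i ≤ m → 0 ≤ esymm (R.q x) i}
        ⊆ R.P ∪ R.Cv v := by
  have h := (R.finite_vertices (by omega)).eventually_all.2 fun v hv =>
    R.eventually_subset_union_Cv hd hs hv
  obtain ⟨ε, hε, hε₀⟩ := (h.and self_mem_nhdsWithin).exists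
  exact ⟨ε, hε₀, hε⟩

end AverkovHenk
end
end
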